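/- arXiv:2003.00496 — 3 statements merged into one kernel-verified Lean document; each statement's English description precedes it below -/
import Mathlib

section
/- Let I be an ideal and P a prime ideal in a polynomial ring over a field. Then P is an associated prime of I if and only if P contains the double ideal quotient (I : (I : P)). -/
/-!
If `P = (I : g)` for some `g`, then `g ∈ (I : P)`, so `(I : (I : P)) ⊆ (I : g) = P`.
Conversely, write the finitely generated ideal `(I : P)` as `(g₁, …, gₖ)`; then
`(I : (I : P)) = ⋂ᵢ (I : gᵢ)`, and since `P` is prime and contains this finite intersection,
it contains some `(I : gᵢ)`. As `gᵢ P ⊆ I` also gives `P ⊆ (I : gᵢ)`, we get `P = (I : gᵢ)`.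
-/

open Ideal Submodule

section Colon

variable {R M : Type*} [CommSemiring R] [AddCommMonoid M] [Module R M]

theorem Submodule.colon_finset_eq_inf (N : Submodule R M) (s : Finset M) :
    N.colon (s : Set M) = s.inf fun x ↦ N.colon {x} := by
  ext r
  simp [mem_colon]

theorem Submodule.exists_colon_singleton_le_of_colon_le {N J : Submodule R M} {P : Ideal R}
    (hJ : J.FG) (hP : P.IsPrime) (h : N.colon (J : Set M) ≤ P) :
    ∃ x ∈ J, N.colon {x} ≤ P := by
  obtain ⟨s, rfl⟩ := hJ
  rw [colon_span, colon_finset_eq_inf, hP.inf_le'] at h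
  obtain ⟨x, hxs, hx⟩ := h
  exact ⟨x, subset_span hxs, hx⟩

theorem Ideal.le_colon_singleton_iff_mem_colon {I P : Ideal R} {g : R} :
    P ≤ I.colon {g} ↔ g ∈ I.colon (P : Set R) := by
  simp only [SetLike.le_def, mem_colon, Set.mem_singleton_iff, forall_eq, SetLike.mem_coe,
    smul_eq_mul, mul_comm g]

theorem Ideal.colon_colon_le_of_colon_singleton_eq {I P : Ideal R} {g : R}
    (h : I.colon {g} = P) : I.colon (I.colon (P : Set R) : Set R) ≤ P :=
  calc I.colon (I.colon (P : Set R) : Set R)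
      ≤ I.colon {g} := colon_mono le_rfl <| Set.singleton_subset_iff.mpr <|
        le_colon_singleton_iff_mem_colon.mp h.ge
    _ = P := h

end Colon

section Quotient

variable {R : Type*} [CommRing R]

theorem Ideal.bot_colon_singleton_mk (I : Ideal R) (f : R) :
    (⊥ : Submodule R (R ⧸ I)).colon {Ideal.Quotient.mk I f} = I.colon {f} := by
  ext r
  rw [mem_colon_singleton, mem_colon_singleton, Submodule.mem_bot, Algebra.smul_def,
    Quotient.algebraMap_eq, ← map_mul, Quotient.eq_zero_iff_mem, smul_eq_mul]

theorem Ideal.mem_associatedPrimes_quotient_iff [IsNoetherianRing R] {I P : Ideal R} :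
    P ∈ associatedPrimes R (R ⧸ I) ↔ P.IsPrime ∧ ∃ g, I.colon {g} = P := by
  rw [AssociatedPrimes.mem_iff, isAssociatedPrime_iff, Quotient.mk_surjective.exists]
  simp only [bot_colon_singleton_mk, eq_comm]

end Quotient

theorem associated_iff_le_doubleIdealQuotient_general {K : Type*} [Field K] {n : ℕ}
    (I P : Ideal (MvPolynomial (Fin n) K)) (hP : P.IsPrime) :
    P ∈ associatedPrimes (MvPolynomial (Fin n) K) (MvPolynomial (Fin n) K ⧸ I) ↔
      I.colon (I.colon P) ≤ P := by
  rw [mem_associatedPrimes_quotient_iff]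
  constructor
  · rintro ⟨-, g, hg⟩
    exact colon_colon_le_of_colon_singleton_eq hg
  · intro h
    obtain ⟨g, hg, hgP⟩ := exists_colon_singleton_le_of_colon_le (IsNoetherian.noetherian _) hP h
    exact ⟨hP, g, le_antisymm hgP (le_colon_singleton_iff_mem_colon.mpr hg)⟩

/-- **Criterion for prime divisors via double ideal quotient.**
In a polynomial ring over a field, a prime `P` is an associated prime of a proper ideal `I`
iff `P ⊇ (I : (I : P))`. -/
theorem associated_iff_le_doubleIdealQuotient {K : Type*} [Field K] {n : ℕ}
    (I P : Ideal (MvPolynomial (Fin n) K)) (hI : I ≠ ⊤) (hP : P.IsPrime) :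
    P ∈ associatedPrimes (MvPolynomial (Fin n) K) (MvPolynomial (Fin n) K ⧸ I) ↔
      I.colon (I.colon P) ≤ P :=
  associated_iff_le_doubleIdealQuotient_general I P hP
end

section
/- Let I be an ideal and J a proper radical ideal in a Noetherian commutative ring. If every associated prime of J is an associated prime of I, then J contains (I : (I : J)). -/
/-!
In a Noetherian ring, the radical of `J` is the intersection of the associated primes of `R ⧸ J`,
since these contain `J` and include its minimal primes. If `P = (I : x)` is an associated prime
of `I` containing `J`, then `x ∈ (I : J)`, so `(I : (I : J)) ⊆ (I : x) = P`.
-/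

open Ideal

namespace Ideal

variable {R : Type*} [CommRing R] {I J P : Ideal R}

theorem le_of_mem_associatedPrimes_quotient (hP : P ∈ associatedPrimes R (R ⧸ I)) : I ≤ P := by
  simpa [Submodule.annihilator_top, annihilator_quotient] using hP.annihilator_le

variable [IsNoetherianRing R]

theorem exists_eq_colon_of_mem_associatedPrimes_quotient (hP : P ∈ associatedPrimes R (R ⧸ I)) :
    ∃ x : R, P = I.colon {x} := by
  obtain ⟨-, z, rfl⟩ := isAssociatedPrime_iff.mp hP
  obtain ⟨x, rfl⟩ := Quotient.mk_surjective z
  refine ⟨x, Submodule.ext fun r => ?_⟩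
  rw [Submodule.mem_colon_singleton, Submodule.mem_bot, Submodule.mem_colon_singleton, smul_eq_mul,
    ← Quotient.eq_zero_iff_mem, map_mul, Algebra.smul_def, Quotient.algebraMap_eq]

theorem colon_colon_le_of_mem_associatedPrimes_quotient (hP : P ∈ associatedPrimes R (R ⧸ I))
    (hJP : J ≤ P) : I.colon (I.colon J) ≤ P := by
  obtain ⟨x, rfl⟩ := exists_eq_colon_of_mem_associatedPrimes_quotient hP
  have hx : x ∈ I.colon J := Submodule.mem_colon.2 fun a ha => by
    simpa [mul_comm] using Submodule.mem_colon_singleton.1 (hJP ha)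
  exact fun f hf => Submodule.mem_colon_singleton.2 (Submodule.mem_colon.1 hf x hx)

variable (I)

theorem sInf_associatedPrimes_quotient_eq_radical :
    sInf (associatedPrimes R (R ⧸ I)) = I.radical := by
  refine le_antisymm ?_ (le_sInf fun P hP =>
    hP.isPrime.radical_le_iff.2 (le_of_mem_associatedPrimes_quotient hP))
  rw [← sInf_minimalPrimes]
  refine sInf_le_sInf ?_
  simpa [annihilator_quotient] using
    Module.associatedPrimes.minimalPrimes_annihilator_subset_associatedPrimes R (R ⧸ I)

end Ideal

theorem le_of_associatedPrimes_subset_general {R : Type*} [CommRing R] [IsNoetherianRing R]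
    (I J : Ideal R) (hJrad : J.radical = J)
    (h : associatedPrimes R (R ⧸ J) ⊆ associatedPrimes R (R ⧸ I)) :
    I.colon (I.colon J) ≤ J :=
  calc I.colon (I.colon J) ≤ sInf (associatedPrimes R (R ⧸ J)) := le_sInf fun P hP =>
        colon_colon_le_of_mem_associatedPrimes_quotient (h hP)
          (le_of_mem_associatedPrimes_quotient hP)
    _ = J := by rw [sInf_associatedPrimes_quotient_eq_radical, hJrad]

/-- If every associated prime of a proper radical ideal `J` is an associated prime of `I`,
then `J ⊇ (I : (I : J))`. -/
theorem le_of_associatedPrimes_subset {R : Type*} [CommRing R] [IsNoetherianRing R]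
    (I J : Ideal R) (hJtop : J ≠ ⊤) (hJrad : J.radical = J)
    (h : associatedPrimes R (R ⧸ J) ⊆ associatedPrimes R (R ⧸ I)) :
    I.colon (I.colon J) ≤ J :=
  le_of_associatedPrimes_subset_general I J hJrad h
end

section
/- Let I be an ideal and J a proper radical ideal in a Noetherian commutative ring. Then Ass(J) ⊆ Ass(I) if and only if J ⊇ (I : (I : J)). -/
/-!
Since `J` is radical, it is the intersection of its minimal primes, all of which are associated
primes of `R ⧸ J`, and every associated prime of `R ⧸ J` contains `J`. An associated prime
`I : y` of `R ⧸ I` containing `J` has `y ∈ I : J`, which is what forces `I : (I : J) ⊆ J`.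
Conversely, if `J = I : K` with `K = I : J` generated by a finite set `s`, then an associated
prime `J : x` of `R ⧸ J` is the intersection of the ideals `I : xk` for `k ∈ s`, and a prime
that is a finite intersection of ideals equals one of them.
-/

open Ideal

namespace Ideal

section CommSemiring

variable {R : Type*} [CommSemiring R]

theorem le_colon_colon (I J : Ideal R) : J ≤ I.colon (I.colon J) := fun j hj ↦
  Submodule.mem_colon.mpr fun y hy ↦ by
    simpa only [smul_eq_mul, mul_comm] using Submodule.mem_colon.mp hy j hj

theorem colon_finset_colon_singleton (I : Ideal R) (s : Finset R) (x : R) :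
    (I.colon ↑s).colon {x} = s.inf fun k ↦ I.colon {x * k} := by
  ext r
  simp only [Submodule.mem_finsetInf, Submodule.mem_colon, Set.mem_singleton_iff, forall_eq,
    Finset.mem_coe, smul_eq_mul, mul_assoc]

end CommSemiring

variable {R : Type*} [CommRing R]

theorem bot_colon_quotient_mk (I : Ideal R) (x : R) :
    (⊥ : Submodule R (R ⧸ I)).colon {Quotient.mk I x} = I.colon {x} := by
  ext r
  rw [Submodule.mem_colon_singleton, Submodule.mem_colon_singleton, Submodule.mem_bot,
    Algebra.smul_def, Quotient.algebraMap_eq, ← map_mul, Quotient.eq_zero_iff_mem,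
    smul_eq_mul]

theorem mem_associatedPrimes_quotient_iff_s5 [IsNoetherianRing R] {I P : Ideal R} :
    P ∈ associatedPrimes R (R ⧸ I) ↔ P.IsPrime ∧ ∃ x : R, P = I.colon {x} := by
  rw [AssociatedPrimes.mem_iff, isAssociatedPrime_iff, Quotient.mk_surjective.exists]
  simp only [bot_colon_quotient_mk]

theorem exists_mem_associatedPrimes_quotient_notMem [IsNoetherianRing R] {J : Ideal R}
    (hJ : J.IsRadical) {x : R} (hx : x ∉ J) :
    ∃ P ∈ associatedPrimes R (R ⧸ J), x ∉ P := by
  rw [← hJ.radical, ← sInf_minimalPrimes, Submodule.mem_sInf] at hx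
  push Not at hx
  obtain ⟨P, hP, hxP⟩ := hx
  have hP' : P ∈ (Module.annihilator R (R ⧸ J)).minimalPrimes := by rwa [annihilator_quotient]
  exact ⟨P,
    Module.associatedPrimes.minimalPrimes_annihilator_subset_associatedPrimes R _ hP', hxP⟩

theorem colon_colon_le_of_associatedPrimes_subset [IsNoetherianRing R] {I J : Ideal R}
    (hJ : J.IsRadical) (h : associatedPrimes R (R ⧸ J) ⊆ associatedPrimes R (R ⧸ I)) :
    I.colon (I.colon J) ≤ J := by
  intro x hx
  by_contra hxJ
  obtain ⟨P, hP, hxP⟩ := exists_mem_associatedPrimes_quotient_notMem hJ hxJ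
  have hJP : J ≤ P := by
    obtain ⟨-, z, rfl⟩ := mem_associatedPrimes_quotient_iff_s5.mp hP
    exact le_colon
  obtain ⟨-, y, rfl⟩ := mem_associatedPrimes_quotient_iff_s5.mp (h hP)
  have hy : y ∈ I.colon J := Submodule.mem_colon.mpr fun j hj ↦ by
    simpa only [smul_eq_mul, mul_comm, Submodule.mem_colon_singleton] using hJP hj
  exact hxP (Submodule.mem_colon_singleton.mpr (Submodule.mem_colon.mp hx y hy))

theorem associatedPrimes_subset_of_colon_colon_le [IsNoetherianRing R] {I J : Ideal R}
    (h : I.colon (I.colon J) ≤ J) :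
    associatedPrimes R (R ⧸ J) ⊆ associatedPrimes R (R ⧸ I) := by
  intro P hP
  obtain ⟨hPprime, x, rfl⟩ := mem_associatedPrimes_quotient_iff_s5.mp hP
  obtain ⟨s, hs⟩ := (I.colon J).fg_of_isNoetherianRing
  have hJ : J = I.colon ↑s := by
    rw [← colon_span, hs]
    exact le_antisymm (le_colon_colon I J) h
  rw [hJ, colon_finset_colon_singleton] at hPprime ⊢
  obtain ⟨k, -, hk⟩ := eq_inf_of_isPrime_inf hPprime
  exact mem_associatedPrimes_quotient_iff_s5.mpr ⟨hPprime, x * k, hk.symm⟩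

end Ideal

theorem associatedPrimes_subset_iff_doubleQuotient_le_general {R : Type*} [CommRing R]
    [IsNoetherianRing R] (I J : Ideal R) (hJrad : J.radical = J) :
    associatedPrimes R (R ⧸ J) ⊆ associatedPrimes R (R ⧸ I) ↔
      I.colon (I.colon J) ≤ J :=
  ⟨colon_colon_le_of_associatedPrimes_subset (radical_eq_iff.mp hJrad),
    associatedPrimes_subset_of_colon_colon_le⟩

/-- For a proper radical ideal `J` in a Noetherian ring, `Ass(J) ⊆ Ass(I)` iff
`J ⊇ (I : (I : J))`. -/
theorem associatedPrimes_subset_iff_doubleQuotient_le {R : Type*} [CommRing R]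
    [IsNoetherianRing R] (I J : Ideal R) (hJtop : J ≠ ⊤) (hJrad : J.radical = J) :
    associatedPrimes R (R ⧸ J) ⊆ associatedPrimes R (R ⧸ I) ↔
      I.colon (I.colon J) ≤ J :=
  associatedPrimes_subset_iff_doubleQuotient_le_general I J hJrad
end
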